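/- arXiv:1109.5804 — 3 statements merged into one kernel-verified Lean document; each statement's English description precedes it below -/
import Mathlib

section
/- Let G be a finite simple graph and 𝒫 a collection of paths in G such that (G, 𝒫) is grid-like. Then the maximum degree of G is at most 4, i.e., every vertex of G is incident to at most 4 edges of G. -/
/-!
A path uses at most two edges at any vertex `v`. All paths of `𝒫` through `v` pairwise
intersect, so the proper 2-colouring of the intersection graph admits at most two of them, and
since every edge at `v` lies on one of these paths, `deg v ≤ 2 · 2`.
-/

namespace SimpleGraph.Walk.IsPath

variable {V : Type*} {G : SimpleGraph V}

lemma ncard_neighborSet_toSubgraph_le_two {u v : V} {p : G.Walk u v} (hp : p.IsPath) (x : V) :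
    (p.toSubgraph.neighborSet x).ncard ≤ 2 := by
  classical
  by_cases hx : x ∈ p.support
  -- split `p` at `x`: both halves are paths starting at `x` (after reversing the first one)
  · have hsnd {a b : V} {q : G.Walk a b} (hq : q.IsPath) :
        (q.toSubgraph.neighborSet a).ncard ≤ 1 :=
      (Set.ncard_le_ncard (t := {q.snd}) fun _ hy => (hq.snd_of_toSubgraph_adj hy).symm).trans_eq
        (Set.ncard_singleton _)
    have htake := hsnd (hp.takeUntil hx).reverse
    rw [toSubgraph_reverse] at htake
    rw [← p.take_spec hx, toSubgraph_append, Subgraph.neighborSet_sup]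
    exact (Set.ncard_union_le _ _).trans (add_le_add htake (hsnd (hp.dropUntil hx)))
  · have : p.toSubgraph.neighborSet x = ∅ :=
      Set.eq_empty_of_forall_notMem fun _ hy => hx (p.mem_verts_toSubgraph.1 hy.fst_mem)
    simp [this]

end SimpleGraph.Walk.IsPath

namespace SimpleGraph

variable {V : Type*} {G : SimpleGraph V}

lemma degree_le_two_mul_card_of_isPath_cover (v : V) [Fintype (G.neighborSet v)]
    (T : Finset (Σ a b : V, G.Walk a b)) (hpath : ∀ P ∈ T, P.2.2.IsPath)
    (hcover : ∀ w, G.Adj v w → ∃ P ∈ T, s(v, w) ∈ P.2.2.edges) :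
    G.degree v ≤ 2 * T.card := by
  classical
  let N (P : Σ a b : V, G.Walk a b) : Finset V :=
    (P.2.2.finite_neighborSet_toSubgraph (w := v)).toFinset
  have hsub : G.neighborFinset v ⊆ T.biUnion N := fun w hw => by
    obtain ⟨P, hPT, hvw⟩ := hcover w ((G.mem_neighborFinset v w).1 hw)
    exact Finset.mem_biUnion.2
      ⟨P, hPT, by simpa [N] using Walk.adj_toSubgraph_iff_mem_edges.2 hvw⟩
  calc G.degree v = (G.neighborFinset v).card := (card_neighborFinset_eq_degree G v).symm
    _ ≤ (T.biUnion N).card := Finset.card_le_card hsub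
    _ ≤ ∑ P ∈ T, (N P).card := Finset.card_biUnion_le
    _ ≤ ∑ _P ∈ T, 2 := Finset.sum_le_sum fun P hP => by
          simpa [N, Set.ncard_eq_toFinset_card _ (P.2.2.finite_neighborSet_toSubgraph)] using
            (hpath P hP).ncard_neighborSet_toSubgraph_le_two v
    _ = 2 * T.card := by rw [Finset.sum_const, smul_eq_mul, mul_comm]

end SimpleGraph

theorem stmt_1_general {V : Type*} [Fintype V] (G : SimpleGraph V) [DecidableRel G.Adj]
    (Ps : Set (Σ u v : V, G.Walk u v))
    (hpath : ∀ P ∈ Ps, P.2.2.IsPath)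
    (hcoverE : ∀ e ∈ G.edgeSet, ∃ P ∈ Ps, e ∈ P.2.2.edges)
    (hbip : ∃ c : (Σ u v : V, G.Walk u v) → Bool,
      ∀ P ∈ Ps, ∀ Q ∈ Ps, P ≠ Q →
        (∃ x : V, x ∈ P.2.2.support ∧ x ∈ Q.2.2.support) → c P ≠ c Q) :
    ∀ v : V, G.degree v ≤ 4 := by
  intro v
  obtain ⟨c, hc⟩ := hbip
  set S := {P ∈ Ps | v ∈ P.2.2.support}
  have hinj : S.InjOn c := fun P hP Q hQ hcPQ =>
    by_contra fun hne => hc P hP.1 Q hQ.1 hne ⟨v, hP.2, hQ.2⟩ hcPQ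
  have hfin : S.Finite := Set.Finite.of_injOn (Set.mapsTo_univ c S) hinj Set.finite_univ
  have hcard : hfin.toFinset.card ≤ 2 :=
    (Finset.card_le_card_of_injOn c (t := Finset.univ)
      (fun _ _ => Finset.mem_coe.2 (Finset.mem_univ _)) (by simpa using hinj)).trans_eq
      (Finset.card_univ.trans Fintype.card_bool)
  have hcover (w : V) (hvw : G.Adj v w) : ∃ P ∈ hfin.toFinset, s(v, w) ∈ P.2.2.edges := by
    obtain ⟨P, hPs, hP⟩ := hcoverE s(v, w) hvw
    exact ⟨P, hfin.mem_toFinset.2 ⟨hPs, P.2.2.fst_mem_support_of_mem_edges hP⟩, hP⟩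
  have hdeg := G.degree_le_two_mul_card_of_isPath_cover v hfin.toFinset
    (fun P hP => hpath P (hfin.mem_toFinset.1 hP).1) hcover
  omega

/-- If `(G, Ps)` is grid-like (every vertex and edge of `G` is covered by
some path of `Ps`, every path of `Ps` has at least two vertices, and the intersection graph of
`Ps` is bipartite, i.e. admits a proper 2-colouring), then the maximum degree of `G` is at
most `4`, i.e. every vertex of `G` is incident to at most `4` edges. -/
theorem stmt_1 {V : Type*} [Fintype V] (G : SimpleGraph V) [DecidableRel G.Adj]
    (Ps : Set (Σ u v : V, G.Walk u v))
    (hpath : ∀ P ∈ Ps, P.2.2.IsPath)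
    (hcoverV : ∀ x : V, ∃ P ∈ Ps, x ∈ P.2.2.support)
    (hcoverE : ∀ e ∈ G.edgeSet, ∃ P ∈ Ps, e ∈ P.2.2.edges)
    (htwo : ∀ P ∈ Ps, 2 ≤ P.2.2.support.length)
    (hbip : ∃ c : (Σ u v : V, G.Walk u v) → Bool,
      ∀ P ∈ Ps, ∀ Q ∈ Ps, P ≠ Q →
        (∃ x : V, x ∈ P.2.2.support ∧ x ∈ Q.2.2.support) → c P ≠ c Q) :
    ∀ v : V, G.degree v ≤ 4 :=
  stmt_1_general G Ps hpath hcoverE hbip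
end

section
/- Let ι be a finite index set partitioned into two disjoint parts A and B, and let (S_i)_{i ∈ ι} be a family of finite sets such that |S_i| ≥ 2 for every i ∈ ι, the sets S_i with i ∈ A are pairwise disjoint, and the sets S_i with i ∈ B are pairwise disjoint. Then the family (S_i)_{i ∈ ι} has a system of distinct representatives: there exists an injective function r on ι with r(i) ∈ S_i for every i ∈ ι. -/
/-- Let the finite index set `ι` be partitioned into disjoint parts `A` and
`B`, and let `S : ι → Finset α` be a family of finite sets with `|S i| ≥ 2` for all `i`, the
sets indexed by `A` pairwise disjoint and the sets indexed by `B` pairwise disjoint.  Then the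
family `S` has a system of distinct representatives: an injective function `r : ι → α` with
`r i ∈ S i` for every `i`. -/
theorem stmt_3 {ι α : Type*} [Fintype ι] [DecidableEq ι] [DecidableEq α]
    (A B : Finset ι) (hunion : A ∪ B = Finset.univ) (hdisj : Disjoint A B)
    (S : ι → Finset α)
    (hbig : ∀ i : ι, 2 ≤ (S i).card)
    (hA : ∀ i ∈ A, ∀ j ∈ A, i ≠ j → Disjoint (S i) (S j))
    (hB : ∀ i ∈ B, ∀ j ∈ B, i ≠ j → Disjoint (S i) (S j)) :
    ∃ r : ι → α, Function.Injective r ∧ ∀ i : ι, r i ∈ S i := by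
  rw [← Finset.all_card_le_biUnion_card_iff_exists_injective]
  intro s
  have key : ∀ (C : Finset ι), (∀ i ∈ C, ∀ j ∈ C, i ≠ j → Disjoint (S i) (S j)) →
      2 * (s ∩ C).card ≤ (s.biUnion S).card := by
    intro C hC
    have hpd : ∀ i ∈ s ∩ C, ∀ j ∈ s ∩ C, i ≠ j → Disjoint (S i) (S j) := fun i hi j hj hij =>
      hC i (Finset.mem_inter.1 hi).2 j (Finset.mem_inter.1 hj).2 hij
    calc 2 * (s ∩ C).card = ∑ _i ∈ s ∩ C, 2 := by simp [mul_comm]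
    _ ≤ ∑ i ∈ s ∩ C, (S i).card := Finset.sum_le_sum fun i _ => hbig i
    _ = ((s ∩ C).biUnion S).card := (Finset.card_biUnion hpd).symm
    _ ≤ (s.biUnion S).card := Finset.card_le_card
        (Finset.biUnion_subset_biUnion_of_subset_left _ Finset.inter_subset_left)
  have hAcard := key A hA
  have hBcard := key B hB
  have hsplit : (s ∩ A).card + (s ∩ B).card = s.card := by
    rw [← Finset.card_union_of_disjoint (Finset.disjoint_of_subset_left Finset.inter_subset_right
      (Finset.disjoint_of_subset_right Finset.inter_subset_right hdisj)),
      ← Finset.inter_union_distrib_left, hunion, Finset.inter_univ]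
  omega
end

section
/- Let b be a positive integer, let S be a robust set of natural numbers, let X be any set (of 'input words'), and let ℓ, g : X → ℕ be functions such that for every x ∈ X one has (ℓ(x))^{1/b} ≤ g(x) ≤ (ℓ(x))^b, where (ℓ(x))^{1/b} denotes the real b-th root of ℓ(x). Define S' = { n ∈ ℕ : for every x ∈ X with ℓ(x) = n, g(x) ∈ S }. Then S' is robust. -/
/-- A set `S` of positive integers is *robust* if for each positive integer `j` there is an
integer `m ≥ 2` such that all integers `n` with `m ≤ n ≤ m ^ j` belong to `S`. -/
def Robust (S : Set ℕ) : Prop :=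
  ∀ j : ℕ, 0 < j → ∃ m : ℕ, 2 ≤ m ∧ ∀ n : ℕ, m ≤ n → n ≤ m ^ j → n ∈ S

/-- Let `b` be a positive integer, `S` a robust set, `X` a set of input
words, and `ℓ g : X → ℕ` functions with `(ℓ x)^{1/b} ≤ g x ≤ (ℓ x)^b` for all `x` (where
`(ℓ x)^{1/b}` is the real `b`-th root).  Then the set
`S' = { n | ∀ x, ℓ x = n → g x ∈ S }` is robust. -/
theorem stmt_7 {X : Type*} (b : ℕ) (hb : 0 < b) (S : Set ℕ) (hS : Robust S)
    (ℓ g : X → ℕ)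
    (hlow : ∀ x : X, (ℓ x : ℝ) ^ ((1 : ℝ) / (b : ℝ)) ≤ (g x : ℝ))
    (hhigh : ∀ x : X, g x ≤ (ℓ x) ^ b) :
    Robust { n : ℕ | ∀ x : X, ℓ x = n → g x ∈ S } := by
  intro j hj
  obtain ⟨M, hM2, hM⟩ := hS (j * b * b) (by positivity)
  refine ⟨M ^ b, le_trans hM2 (Nat.le_self_pow hb.ne' M), ?_⟩
  intro n hn1 hn2 x hx
  apply hM
  · -- M ≤ g x
    have h1 := hlow x
    rw [hx] at h1
    have hcast : ((M ^ b : ℕ) : ℝ) ≤ (n : ℝ) := by exact_mod_cast hn1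
    have key : (M : ℝ) ≤ (n : ℝ) ^ ((1 : ℝ) / (b : ℝ)) := by
      have hb' : (0 : ℝ) < (b : ℝ) := by exact_mod_cast hb
      calc (M : ℝ) = ((M : ℝ) ^ (b : ℕ)) ^ ((1 : ℝ) / (b : ℝ)) := by
              rw [← Real.rpow_natCast (M : ℝ) b, ← Real.rpow_mul (by positivity),
                mul_one_div, div_self hb'.ne', Real.rpow_one]
        _ ≤ (n : ℝ) ^ ((1 : ℝ) / (b : ℝ)) := by
              apply Real.rpow_le_rpow (by positivity) _ (by positivity)
              push_cast at hcast ⊢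
              linarith
    exact_mod_cast key.trans h1
  · -- g x ≤ M ^ (j * b * b)
    have h2 := hhigh x
    rw [hx] at h2
    calc g x ≤ n ^ b := h2
      _ ≤ ((M ^ b) ^ j) ^ b := Nat.pow_le_pow_left hn2 b
      _ = M ^ (j * b * b) := by ring
end
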